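/- Interlacing property of the SCA iterates: let (Q^0, W^0) ∈ S_Z, assume Cs is bounded above on S_Z, set C_s^* = sup_{(Q,W)∈S_Z} Cs(Q,W), and suppose for every v ≥ 1 the triple (Q^v, W^v, t^v) is a maximizer of R(Q,t) over S_{Z,t}(Q^{v−1}, W^{v−1}). Then for every v ≥ 2: C_s^* ≥ Cs(Q^v, W^v) ≥ R(Q^v, t^v) ≥ Cs(Q^{v−1}, W^{v−1}) ≥ R(Q^{v−1}, t^{v−1}). -/

import Mathlib

/-!
`log det` is concave on positive definite matrices, so its first-order expansion `φ̄_k` majorizes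
`φ_k`, and `C_lk(·|Q',W')` majorizes `C_k`. Hence every point `((Q,W),t)` of a convexified feasible
set has `R(Q,t) ≤ C_s(Q,W)`. Conversely the expansion is exact at its base point, so
`((Q',W'), max_k C_k(Q',W'))` lies in `S_{Z,t}(Q',W')` with objective value `C_s(Q',W')`, which the
maximizer can only improve on. Concavity itself comes from writing `A⁻¹ = Cᴴ C` and applying
`log x ≤ x - 1` to the eigenvalues of `C B Cᴴ`.
-/

open Matrix Finset ComplexOrder

namespace SRM

/-- `log det` of a complex matrix: real logarithm of the real part of the determinant. -/
noncomputable def phik {m n : ℕ} (H P : Matrix (Fin m) (Fin n) ℂ)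
    (Q W : Matrix (Fin n) (Fin n) ℂ) : ℝ :=
  Real.log ((1 + H * Q * Hᴴ + P * W * Pᴴ).det.re)

noncomputable def phiHat {m n : ℕ} (P : Matrix (Fin m) (Fin n) ℂ)
    (W : Matrix (Fin n) (Fin n) ℂ) : ℝ :=
  Real.log ((1 + P * W * Pᴴ).det.re)

/-- The `k`-th eavesdropper rate `C_k(Q,W)`. -/
noncomputable def Ceav {m n : ℕ} (H P : Matrix (Fin m) (Fin n) ℂ)
    (Q W : Matrix (Fin n) (Fin n) ℂ) : ℝ :=
  phik H P Q W - phiHat P W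

/-- The legitimate (Alice-Bob) rate `C_0(Q)`. -/
noncomputable def C0 {m n : ℕ} (H0 : Matrix (Fin m) (Fin n) ℂ)
    (Q : Matrix (Fin n) (Fin n) ℂ) : ℝ :=
  Real.log ((1 + H0 * Q * H0ᴴ).det.re)

/-- Gradient matrix `T_k(Q',W')`. -/
noncomputable def Tmat {m n : ℕ} (H P : Matrix (Fin m) (Fin n) ℂ)
    (Q' W' : Matrix (Fin n) (Fin n) ℂ) : Matrix (Fin n) (Fin n) ℂ :=
  Hᴴ * (1 + H * Q' * Hᴴ + P * W' * Pᴴ)⁻¹ * H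

/-- Gradient matrix `R_k(Q',W')`. -/
noncomputable def Rmat {m n : ℕ} (H P : Matrix (Fin m) (Fin n) ℂ)
    (Q' W' : Matrix (Fin n) (Fin n) ℂ) : Matrix (Fin n) (Fin n) ℂ :=
  Pᴴ * (1 + H * Q' * Hᴴ + P * W' * Pᴴ)⁻¹ * P

/-- Gradient of `φ̂_k` with respect to `W`. -/
noncomputable def Dmat {m n : ℕ} (P : Matrix (Fin m) (Fin n) ℂ)
    (W : Matrix (Fin n) (Fin n) ℂ) : Matrix (Fin n) (Fin n) ℂ :=
  Pᴴ * (1 + P * W * Pᴴ)⁻¹ * P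

/-- Gradient of `C_0` with respect to `Q`. -/
noncomputable def D0mat {m n : ℕ} (H0 : Matrix (Fin m) (Fin n) ℂ)
    (Q : Matrix (Fin n) (Fin n) ℂ) : Matrix (Fin n) (Fin n) ℂ :=
  H0ᴴ * (1 + H0 * Q * H0ᴴ)⁻¹ * H0

/-- First-order (linear) approximation `φ̄_k(Q,W | Q',W')` of `φ_k` around `(Q',W')`. -/
noncomputable def phiBar {m n : ℕ} (H P : Matrix (Fin m) (Fin n) ℂ)
    (Q W Q' W' : Matrix (Fin n) (Fin n) ℂ) : ℝ :=
  phik H P Q' W' + ((Tmat H P Q' W' * (Q - Q')).trace).re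
    + ((Rmat H P Q' W' * (W - W')).trace).re

/-- Convexified eavesdropper rate `C_{lk}(Q,W | Q',W')`. -/
noncomputable def Clk {m n : ℕ} (H P : Matrix (Fin m) (Fin n) ℂ)
    (Q W Q' W' : Matrix (Fin n) (Fin n) ℂ) : ℝ :=
  phiBar H P Q W Q' W' - phiHat P W

/-- Secrecy rate `C_s(Q,W) = C_0(Q) - max_k C_k(Q,W)`. -/
noncomputable def Cs {m0 n : ℕ} {K : Type*} [Fintype K] [Nonempty K] {mk : K → ℕ}
    (H0 : Matrix (Fin m0) (Fin n) ℂ)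
    (Hm Pm : (k : K) → Matrix (Fin (mk k)) (Fin n) ℂ)
    (Q W : Matrix (Fin n) (Fin n) ℂ) : ℝ :=
  C0 H0 Q - Finset.univ.sup' Finset.univ_nonempty (fun k => Ceav (Hm k) (Pm k) Q W)

/-- The feasible set `S_Z`. -/
def SZ {mg n : ℕ} (G : Matrix (Fin mg) (Fin n) ℂ) (V : Matrix (Fin n) (Fin n) ℂ)
    (Pmax Γ : ℝ) : Set (Matrix (Fin n) (Fin n) ℂ × Matrix (Fin n) (Fin n) ℂ) :=
  {Z | Z.1.PosSemidef ∧ Z.2.PosSemidef ∧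
    ((G * Z.1 * Gᴴ + G * V * Z.2 * Vᴴ * Gᴴ).trace).re ≤ Γ ∧
    ((Z.1 + Z.2).trace).re ≤ Pmax}

/-- The approximate feasible set `S_{Z,t}(Q',W')`. -/
def SZt {mg n : ℕ} {K : Type*} [Fintype K] {mk : K → ℕ}
    (G : Matrix (Fin mg) (Fin n) ℂ) (V : Matrix (Fin n) (Fin n) ℂ) (Pmax Γ : ℝ)
    (Hm Pm : (k : K) → Matrix (Fin (mk k)) (Fin n) ℂ)
    (Q' W' : Matrix (Fin n) (Fin n) ℂ) :
    Set ((Matrix (Fin n) (Fin n) ℂ × Matrix (Fin n) (Fin n) ℂ) × ℝ) :=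
  {x | x.1 ∈ SZ G V Pmax Γ ∧ ∀ k : K, Clk (Hm k) (Pm k) x.1.1 x.1.2 Q' W' ≤ x.2}

/-- The objective `R(Q,t) = C_0(Q) - t`. -/
noncomputable def Robj {m0 n : ℕ} (H0 : Matrix (Fin m0) (Fin n) ℂ)
    (Q : Matrix (Fin n) (Fin n) ℂ) (t : ℝ) : ℝ :=
  C0 H0 Q - t

end SRM

namespace Matrix.PosDef

variable {ι : Type*} [Fintype ι] [DecidableEq ι] {A B : Matrix ι ι ℂ}

theorem ofReal_det_re (hA : A.PosDef) : (A.det.re : ℂ) = A.det :=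
  Complex.ext rfl (Complex.pos_iff.1 hA.det_pos).2

theorem det_re_pos (hA : A.PosDef) : 0 < A.det.re :=
  (Complex.pos_iff.1 hA.det_pos).1

theorem log_det_re_le_trace_re_sub_card (hA : A.PosDef) :
    Real.log A.det.re ≤ A.trace.re - Fintype.card ι := by
  have hdet : A.det.re = ∏ i, hA.1.eigenvalues i := by
    rw [hA.1.det_eq_prod_eigenvalues]; norm_cast
  have htr : A.trace.re = ∑ i, hA.1.eigenvalues i := by
    rw [hA.1.trace_eq_sum_eigenvalues]; norm_cast
  rw [hdet, htr, Real.log_prod fun i _ => (hA.eigenvalues_pos i).ne']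
  calc ∑ i, Real.log (hA.1.eigenvalues i) ≤ ∑ i, (hA.1.eigenvalues i - 1) :=
        sum_le_sum fun i _ => Real.log_le_sub_one_of_pos (hA.eigenvalues_pos i)
    _ = _ := by simp [sum_sub_distrib]

open scoped MatrixOrder in
theorem exists_conjTranspose_mul_self_eq_inv (hA : A.PosDef) :
    ∃ C : Matrix ι ι ℂ, IsUnit C ∧ Cᴴ * C = A⁻¹ := by
  obtain ⟨C, hC⟩ := CStarAlgebra.nonneg_iff_eq_star_mul_self.mp hA.inv.posSemidef.nonneg
  refine ⟨C, ?_, hC.symm⟩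
  have hdet : IsUnit (Cᴴ * C).det := by
    rw [← star_eq_conjTranspose, ← hC, ← isUnit_iff_isUnit_det]
    exact hA.inv.isUnit
  rw [det_mul] at hdet
  exact (isUnit_iff_isUnit_det C).2 (isUnit_of_mul_isUnit_right hdet)

theorem log_det_re_le_add_trace_re_inv_mul_sub (hA : A.PosDef) (hB : B.PosDef) :
    Real.log B.det.re ≤ Real.log A.det.re + (A⁻¹ * (B - A)).trace.re := by
  obtain ⟨C, hC, hCA⟩ := hA.exists_conjTranspose_mul_self_eq_inv
  have hM : (C * B * Cᴴ).PosDef := hB.mul_mul_conjTranspose_same (vecMul_injective_of_isUnit hC)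
  have hdet : (C * B * Cᴴ).det = (A.det.re : ℂ)⁻¹ * (B.det.re : ℂ) := by
    rw [hA.ofReal_det_re, hB.ofReal_det_re, det_mul, det_mul, mul_comm, ← mul_assoc, ← det_mul,
      hCA, det_nonsing_inv, Ring.inverse_eq_inv']
  have htr : (A⁻¹ * (B - A)).trace = (C * B * Cᴴ).trace - Fintype.card ι := by
    rw [trace_mul_cycle, hCA, Matrix.mul_sub, trace_sub,
      nonsing_inv_mul A ((isUnit_iff_isUnit_det A).1 hA.isUnit), trace_one]
  have key := hM.log_det_re_le_trace_re_sub_card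
  rw [hdet, ← Complex.ofReal_inv, ← Complex.ofReal_mul, Complex.ofReal_re,
    Real.log_mul (inv_ne_zero hA.det_re_pos.ne') hB.det_re_pos.ne', Real.log_inv] at key
  rw [htr, Complex.sub_re, Complex.natCast_re]
  linarith

end Matrix.PosDef

namespace SRM

section Linearization

variable {m n : ℕ} (H P : Matrix (Fin m) (Fin n) ℂ) {Q W Q' W' : Matrix (Fin n) (Fin n) ℂ}

theorem posDef_one_add_add (hQ : Q.PosSemidef) (hW : W.PosSemidef) :
    (1 + H * Q * Hᴴ + P * W * Pᴴ).PosDef :=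
  (PosDef.one.add_posSemidef (hQ.mul_mul_conjTranspose_same H)).add_posSemidef
    (hW.mul_mul_conjTranspose_same P)

theorem phik_le_phiBar (hQ : Q.PosSemidef) (hW : W.PosSemidef)
    (hQ' : Q'.PosSemidef) (hW' : W'.PosSemidef) :
    phik H P Q W ≤ phiBar H P Q W Q' W' := by
  set A := 1 + H * Q' * Hᴴ + P * W' * Pᴴ with hA
  have hBA : 1 + H * Q * Hᴴ + P * W * Pᴴ - A = H * (Q - Q') * Hᴴ + P * (W - W') * Pᴴ := by
    simp only [hA, Matrix.mul_sub, Matrix.sub_mul]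
    abel
  have htr : (A⁻¹ * (1 + H * Q * Hᴴ + P * W * Pᴴ - A)).trace
      = (Tmat H P Q' W' * (Q - Q')).trace + (Rmat H P Q' W' * (W - W')).trace := by
    rw [hBA, Matrix.mul_add, trace_add, trace_mul_cycle' A⁻¹ (H * (Q - Q')) Hᴴ,
      trace_mul_cycle' A⁻¹ (P * (W - W')) Pᴴ]
    rw [Tmat, Rmat, ← hA]
    simp only [Matrix.mul_assoc]
  have key := (posDef_one_add_add H P hQ' hW').log_det_re_le_add_trace_re_inv_mul_sub
    (posDef_one_add_add H P hQ hW)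
  rw [htr, Complex.add_re] at key
  simp only [phik, phiBar]
  linarith

theorem Ceav_le_Clk (hQ : Q.PosSemidef) (hW : W.PosSemidef)
    (hQ' : Q'.PosSemidef) (hW' : W'.PosSemidef) :
    Ceav H P Q W ≤ Clk H P Q W Q' W' :=
  sub_le_sub_right (phik_le_phiBar H P hQ hW hQ' hW') _

theorem Clk_self : Clk H P Q W Q W = Ceav H P Q W := by
  simp [Clk, Ceav, phiBar]

end Linearization

section Iterates

variable {n mg m0 : ℕ} {K : Type*} [Fintype K] [Nonempty K] {mk : K → ℕ}
  {H0 : Matrix (Fin m0) (Fin n) ℂ} {G : Matrix (Fin mg) (Fin n) ℂ} {V : Matrix (Fin n) (Fin n) ℂ}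
  {Pmax Γ : ℝ} {Hm Pm : (k : K) → Matrix (Fin (mk k)) (Fin n) ℂ}
  {Q W Q' W' : Matrix (Fin n) (Fin n) ℂ}

theorem Robj_le_Cs_of_mem_SZt {t : ℝ} (hQ' : Q'.PosSemidef) (hW' : W'.PosSemidef)
    (h : ((Q, W), t) ∈ SZt G V Pmax Γ Hm Pm Q' W') :
    Robj H0 Q t ≤ Cs H0 Hm Pm Q W := by
  obtain ⟨⟨hQ, hW, -⟩, hClk⟩ := h
  exact sub_le_sub_left
    (sup'_le _ _ fun k _ => (Ceav_le_Clk _ _ hQ hW hQ' hW').trans (hClk k)) _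

theorem mem_SZt_self (h : (Q, W) ∈ SZ G V Pmax Γ) :
    ((Q, W), univ.sup' univ_nonempty fun k => Ceav (Hm k) (Pm k) Q W) ∈
      SZt G V Pmax Γ Hm Pm Q W :=
  ⟨h, fun k => (Clk_self _ _).trans_le (le_sup' (fun k => Ceav (Hm k) (Pm k) Q W) (mem_univ k))⟩

theorem Cs_le_of_forall_Robj_le {r : ℝ} (h : (Q, W) ∈ SZ G V Pmax Γ)
    (hmax : ∀ x ∈ SZt G V Pmax Γ Hm Pm Q W, Robj H0 x.1.1 x.2 ≤ r) :
    Cs H0 Hm Pm Q W ≤ r :=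
  -- `R(Q, max_k C_k(Q,W))` unfolds to `C_s(Q,W)`
  (hmax _ (mem_SZt_self h) :)

end Iterates

theorem interlacing_general {n mg m0 : ℕ} {K : Type*} [Fintype K] [Nonempty K] {mk : K → ℕ}
    (H0 : Matrix (Fin m0) (Fin n) ℂ)
    (G : Matrix (Fin mg) (Fin n) ℂ) (V : Matrix (Fin n) (Fin n) ℂ)
    (Pmax Γ : ℝ)
    (Hm Pm : (k : K) → Matrix (Fin (mk k)) (Fin n) ℂ)
    (Qs Ws : ℕ → Matrix (Fin n) (Fin n) ℂ) (ts : ℕ → ℝ)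
    (h0 : (Qs 0, Ws 0) ∈ SZ G V Pmax Γ)
    (hbdd : BddAbove ((fun Z => Cs H0 Hm Pm Z.1 Z.2) '' SZ G V Pmax Γ))
    (hiter : ∀ v : ℕ, 1 ≤ v →
      ((Qs v, Ws v), ts v) ∈ SZt G V Pmax Γ Hm Pm (Qs (v - 1)) (Ws (v - 1)) ∧
      ∀ x ∈ SZt G V Pmax Γ Hm Pm (Qs (v - 1)) (Ws (v - 1)),
        Robj H0 x.1.1 x.2 ≤ Robj H0 (Qs v) (ts v))
    (v : ℕ) (hv : 2 ≤ v) :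
    Cs H0 Hm Pm (Qs v) (Ws v) ≤ sSup ((fun Z => Cs H0 Hm Pm Z.1 Z.2) '' SZ G V Pmax Γ) ∧
    Robj H0 (Qs v) (ts v) ≤ Cs H0 Hm Pm (Qs v) (Ws v) ∧
    Cs H0 Hm Pm (Qs (v - 1)) (Ws (v - 1)) ≤ Robj H0 (Qs v) (ts v) ∧
    Robj H0 (Qs (v - 1)) (ts (v - 1)) ≤ Cs H0 Hm Pm (Qs (v - 1)) (Ws (v - 1)) := by
  have hSZ : ∀ u, (Qs u, Ws u) ∈ SZ G V Pmax Γ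
    | 0 => h0
    | u + 1 => (hiter (u + 1) (by omega)).1.1
  have hRobj_le_Cs (u : ℕ) (hu : 1 ≤ u) : Robj H0 (Qs u) (ts u) ≤ Cs H0 Hm Pm (Qs u) (Ws u) :=
    Robj_le_Cs_of_mem_SZt (hSZ (u - 1)).1 (hSZ (u - 1)).2.1 (hiter u hu).1
  exact ⟨le_csSup hbdd ⟨_, hSZ v, rfl⟩, hRobj_le_Cs v (by omega),
    Cs_le_of_forall_Robj_le (hSZ (v - 1)) (hiter v (by omega)).2, hRobj_le_Cs (v - 1) (by omega)⟩

/-- interlacing property of the SCA iterates: for every `v ≥ 2`,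
`C_s^* ≥ C_s(Q^v,W^v) ≥ R(Q^v,t^v) ≥ C_s(Q^{v-1},W^{v-1}) ≥ R(Q^{v-1},t^{v-1})`. -/
theorem interlacing {n mg m0 : ℕ} {K : Type*} [Fintype K] [Nonempty K] {mk : K → ℕ} (hn : 0 < n)
    (H0 : Matrix (Fin m0) (Fin n) ℂ)
    (G : Matrix (Fin mg) (Fin n) ℂ) (V : Matrix (Fin n) (Fin n) ℂ)
    (Pmax Γ : ℝ) (hPmax : 0 ≤ Pmax) (hΓ : 0 ≤ Γ)
    (Hm Pm : (k : K) → Matrix (Fin (mk k)) (Fin n) ℂ)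
    (Qs Ws : ℕ → Matrix (Fin n) (Fin n) ℂ) (ts : ℕ → ℝ)
    (h0 : (Qs 0, Ws 0) ∈ SZ G V Pmax Γ)
    (hbdd : BddAbove ((fun Z => Cs H0 Hm Pm Z.1 Z.2) '' SZ G V Pmax Γ))
    (hiter : ∀ v : ℕ, 1 ≤ v →
      ((Qs v, Ws v), ts v) ∈ SZt G V Pmax Γ Hm Pm (Qs (v - 1)) (Ws (v - 1)) ∧
      ∀ x ∈ SZt G V Pmax Γ Hm Pm (Qs (v - 1)) (Ws (v - 1)),
        Robj H0 x.1.1 x.2 ≤ Robj H0 (Qs v) (ts v))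
    (v : ℕ) (hv : 2 ≤ v) :
    Cs H0 Hm Pm (Qs v) (Ws v) ≤ sSup ((fun Z => Cs H0 Hm Pm Z.1 Z.2) '' SZ G V Pmax Γ) ∧
    Robj H0 (Qs v) (ts v) ≤ Cs H0 Hm Pm (Qs v) (Ws v) ∧
    Cs H0 Hm Pm (Qs (v - 1)) (Ws (v - 1)) ≤ Robj H0 (Qs v) (ts v) ∧
    Robj H0 (Qs (v - 1)) (ts (v - 1)) ≤ Cs H0 Hm Pm (Qs (v - 1)) (Ws (v - 1)) :=
  interlacing_general H0 G V Pmax Γ Hm Pm Qs Ws ts h0 hbdd hiter v hv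

end SRM
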